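/- Let σ and θ be finite substitutions over the same domain and M a non-trivial model of the free equality axioms FEA(L). Then the following are equivalent: (i) Inst_M(σ) = Inst_M(θ); (ii) σ ≈ θ; (iii) σ and θ are variants, i.e., σ = θτ for some permutation τ (a substitution that is a one-to-one map from its domain onto a set of variables). -/

import Mathlib

/-- A first-order language: function symbols with arities and predicate
symbols with arities.  Variables are natural numbers. -/
structure FOLang where
  Func : Type
  farity : Func → ℕ
  Pred : Type
  parity : Pred → ℕ

/-- The language has at least one constant. -/
def FOLang.HasConst (L : FOLang) : Prop := ∃ f : L.Func, L.farity f = 0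

/-- Terms over a language. -/
inductive FOTerm (L : FOLang) : Type where
  | var : ℕ → FOTerm L
  | func : (f : L.Func) → (Fin (L.farity f) → FOTerm L) → FOTerm L

namespace FOTerm

variable {L : FOLang}

/-- The (finite) set of variables occurring in a term. -/
def vars : FOTerm L → Finset ℕ
  | .var x => {x}
  | .func _ ts => Finset.univ.biUnion fun i => (ts i).vars

/-- Application of a (total) substitution to a term: simultaneously replace
every variable `x` by the term `f x`. -/
def applyT (f : ℕ → FOTerm L) : FOTerm L → FOTerm L
  | .var x => f x
  | .func g ts => .func g fun i => (ts i).applyT f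

end FOTerm

/-- A pre-interpretation: a non-empty universe together with an
interpretation of the function symbols. -/
structure FOStruc (L : FOLang) where
  carrier : Type
  inhab : Nonempty carrier
  funcs : (f : L.Func) → (Fin (L.farity f) → carrier) → carrier

/-- Evaluation of a term under a valuation. -/
def FOTerm.eval {L : FOLang} (M : FOStruc L) (h : ℕ → M.carrier) : FOTerm L → M.carrier
  | .var x => h x
  | .func f ts => M.funcs f fun i => (ts i).eval M h

/-- The set of `M`-instances of a term: values of the term under all
valuations. -/
def InstT {L : FOLang} (M : FOStruc L) (t : FOTerm L) : Set M.carrier :=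
  { a | ∃ h : ℕ → M.carrier, t.eval M h = a }

/-- `M` is a model of the free equality axioms `FEA(L)`. -/
structure IsFEA {L : FOLang} (M : FOStruc L) : Prop where
  inj : ∀ f : L.Func, Function.Injective (M.funcs f)
  disj : ∀ f g : L.Func, f ≠ g → ∀ a b, M.funcs f a ≠ M.funcs g b
  occ : ∀ (x : ℕ) (t : FOTerm L), t ≠ .var x → x ∈ t.vars →
      ∀ h : ℕ → M.carrier, h x ≠ t.eval M h

/-- The domain has at least two elements. -/
def FOStruc.Nontriv {L : FOLang} (M : FOStruc L) : Prop :=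
  ∃ a b : M.carrier, a ≠ b

/-- The difference set `Diff(s,t)`: `InDiff s t (s',t')` means the pair
`(s',t')` belongs to `Diff(s,t)`. -/
inductive InDiff {L : FOLang} : FOTerm L → FOTerm L → FOTerm L × FOTerm L → Prop where
  | var (x : ℕ) : InDiff (.var x) (.var x) (.var x, .var x)
  | varVar {x y : ℕ} : x ≠ y → InDiff (.var x) (.var y) (.var x, .var y)
  | varFunc (x : ℕ) (f : L.Func) (ts : Fin (L.farity f) → FOTerm L) :
      InDiff (.var x) (.func f ts) (.var x, .func f ts)
  | funcVar (f : L.Func) (ss : Fin (L.farity f) → FOTerm L) (y : ℕ) :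
      InDiff (.func f ss) (.var y) (.func f ss, .var y)
  | funcFunc {f g : L.Func} (ss : Fin (L.farity f) → FOTerm L)
      (ts : Fin (L.farity g) → FOTerm L) : f ≠ g →
      InDiff (.func f ss) (.func g ts) (.func f ss, .func g ts)
  | func {f : L.Func} (ss ts : Fin (L.farity f) → FOTerm L) (i : Fin (L.farity f))
      {p : FOTerm L × FOTerm L} :
      InDiff (ss i) (ts i) p → InDiff (.func f ss) (.func f ts) p
/-- An interpretation: a pre-interpretation together with an interpretation
of the predicate symbols. -/
structure FOInterp (L : FOLang) extends FOStruc L where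
  preds : (p : L.Pred) → (Fin (L.parity p) → carrier) → Prop

/-- First-order formulas. -/
inductive FOForm (L : FOLang) : Type where
  | tru : FOForm L
  | fal : FOForm L
  | eq : FOTerm L → FOTerm L → FOForm L
  | atom : (p : L.Pred) → (Fin (L.parity p) → FOTerm L) → FOForm L
  | not : FOForm L → FOForm L
  | and : FOForm L → FOForm L → FOForm L
  | or : FOForm L → FOForm L → FOForm L
  | imp : FOForm L → FOForm L → FOForm L
  | iff : FOForm L → FOForm L → FOForm L
  | ex : ℕ → FOForm L → FOForm L
  | all : ℕ → FOForm L → FOForm L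

namespace FOForm

variable {L : FOLang}

/-- Tarskian satisfaction of a formula in an interpretation under a valuation. -/
def Sat (I : FOInterp L) (h : ℕ → I.carrier) : FOForm L → Prop
  | .tru => True
  | .fal => False
  | .eq s t => s.eval I.toFOStruc h = t.eval I.toFOStruc h
  | .atom p ts => I.preds p fun i => (ts i).eval I.toFOStruc h
  | .not F => ¬ F.Sat I h
  | .and F G => F.Sat I h ∧ G.Sat I h
  | .or F G => F.Sat I h ∨ G.Sat I h
  | .imp F G => F.Sat I h → G.Sat I h
  | .iff F G => F.Sat I h ↔ G.Sat I h
  | .ex x F => ∃ d : I.carrier, F.Sat I (Function.update h x d)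
  | .all x F => ∀ d : I.carrier, F.Sat I (Function.update h x d)

/-- Free variables of a formula. -/
def fv : FOForm L → Finset ℕ
  | .tru => ∅
  | .fal => ∅
  | .eq s t => s.vars ∪ t.vars
  | .atom _ ts => Finset.univ.biUnion fun i => (ts i).vars
  | .not F => F.fv
  | .and F G => F.fv ∪ G.fv
  | .or F G => F.fv ∪ G.fv
  | .imp F G => F.fv ∪ G.fv
  | .iff F G => F.fv ∪ G.fv
  | .ex x F => F.fv.erase x
  | .all x F => F.fv.erase x

end FOForm

/-- The interpretation obtained from a pre-interpretation by interpreting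
every predicate symbol as the empty relation (for formulas without atoms
the choice is irrelevant). -/
def FOStruc.toInterp {L : FOLang} (M : FOStruc L) : FOInterp L :=
  { toFOStruc := M, preds := fun _ _ => False }

/-- Satisfaction of an (equational) formula in a pre-interpretation. -/
def ESat {L : FOLang} (M : FOStruc L) (h : ℕ → M.carrier) (F : FOForm L) : Prop :=
  F.Sat M.toInterp h

/-- The set of solutions of a formula in a pre-interpretation. -/
def SolE {L : FOLang} (M : FOStruc L) (F : FOForm L) : Set (ℕ → M.carrier) :=
  { h | ESat M h F }

/-- EQ-formulas: built from `True`, `False` and equations using `∧` and `∃`. -/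
inductive IsEQ {L : FOLang} : FOForm L → Prop where
  | tru : IsEQ .tru
  | fal : IsEQ .fal
  | eq (s t : FOTerm L) : IsEQ (.eq s t)
  | and {F G : FOForm L} : IsEQ F → IsEQ G → IsEQ (.and F G)
  | ex (x : ℕ) {F : FOForm L} : IsEQ F → IsEQ (.ex x F)

/-- Equational formulas: first-order formulas with no atoms other than
equations. -/
inductive IsEquational {L : FOLang} : FOForm L → Prop where
  | tru : IsEquational .tru
  | fal : IsEquational .fal
  | eq (s t : FOTerm L) : IsEquational (.eq s t)
  | not {F : FOForm L} : IsEquational F → IsEquational (.not F)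
  | and {F G : FOForm L} : IsEquational F → IsEquational G → IsEquational (.and F G)
  | or {F G : FOForm L} : IsEquational F → IsEquational G → IsEquational (.or F G)
  | imp {F G : FOForm L} : IsEquational F → IsEquational G → IsEquational (.imp F G)
  | iff {F G : FOForm L} : IsEquational F → IsEquational G → IsEquational (.iff F G)
  | ex (x : ℕ) {F : FOForm L} : IsEquational F → IsEquational (.ex x F)
  | all (x : ℕ) {F : FOForm L} : IsEquational F → IsEquational (.all x F)

/-- `F ≼ F'` : `F → F'` is true in every model of `FEA(L)`. -/
def EQle {L : FOLang} (F F' : FOForm L) : Prop :=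
  ∀ M : FOStruc L, IsFEA M → ∀ h : ℕ → M.carrier, ESat M h F → ESat M h F'

/-- `F ≈ F'` : `F ↔ F'` is true in every model of `FEA(L)`. -/
def EQequiv {L : FOLang} (F F' : FOForm L) : Prop := EQle F F' ∧ EQle F' F

/-- `F ≺ F'`. -/
def EQlt {L : FOLang} (F F' : FOForm L) : Prop := EQle F F' ∧ ¬ EQequiv F F'

/-- The conjunction `x₁ = s₁ ∧ … ∧ xₙ = sₙ`. -/
def conjOf {L : FOLang} : List (ℕ × FOTerm L) → FOForm L
  | [] => .tru
  | [p] => .eq (.var p.1) p.2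
  | p :: rest => .and (.eq (.var p.1) p.2) (conjOf rest)

/-- The formula `(∃ z₁) … (∃ z_k) F`. -/
def exOf {L : FOLang} (zs : List ℕ) (F : FOForm L) : FOForm L :=
  zs.foldr .ex F

/-- The disjunction `F₁ ∨ … ∨ Fₙ`. -/
def disjOf {L : FOLang} : List (FOForm L) → FOForm L
  | [] => .fal
  | [F] => F
  | F :: rest => .or F (disjOf rest)

/-- A formula is in solved form if it is `True`, `False`, or of the shape
`∃ z₁ … ∃ z_k (x₁ = s₁ ∧ … ∧ xₙ = sₙ)` where the `xᵢ` and `z_j` are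
pairwise distinct, no `xᵢ` occurs in any right-hand side, every `z_j`
occurs in the conjunction, and no `sᵢ` is one of the `z_j`. -/
def SolvedForm {L : FOLang} (F : FOForm L) : Prop :=
  F = .tru ∨ F = .fal ∨
    ∃ (zs : List ℕ) (eqs : List (ℕ × FOTerm L)),
      eqs ≠ [] ∧
      F = exOf zs (conjOf eqs) ∧
      (eqs.map Prod.fst ++ zs).Nodup ∧
      (∀ p ∈ eqs, ∀ q ∈ eqs, p.1 ∉ q.2.vars) ∧
      (∀ z ∈ zs, ∃ p ∈ eqs, z ∈ p.2.vars) ∧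
      (∀ z ∈ zs, ∀ p ∈ eqs, p.2 ≠ .var z)

/-- The projection of an EQ-formula onto a finite set of variables:
existentially quantify the free variables not in `X`; the projection of
`False` is `False`. -/
def projE {L : FOLang} (E : FOForm L) (X : Finset ℕ) : FOForm L :=
  match E with
  | .fal => .fal
  | E => exOf ((E.fv \ X).sort (· ≤ ·)) E

/-- The universal closure of a formula. -/
def univClosure {L : FOLang} (F : FOForm L) : FOForm L :=
  (F.fv.sort (· ≤ ·)).foldr .all F

/-- A formula is valid if it is true in every interpretation (under every
valuation). -/
def FOValid {L : FOLang} (F : FOForm L) : Prop :=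
  ∀ (I : FOInterp L) (h : ℕ → I.carrier), F.Sat I h

/-- An EQ-formula is consistent if it has a solution in some model of the
free equality axioms. -/
def EQConsistent {L : FOLang} (E : FOForm L) : Prop :=
  ∃ M : FOStruc L, IsFEA M ∧ ∃ h : ℕ → M.carrier, ESat M h E
/-- Ground terms: terms with no variables. -/
def GroundTerm (L : FOLang) : Type := { t : FOTerm L // t.vars = ∅ }

/-- The Herbrand pre-interpretation: its domain is the set of ground terms
and function symbols are interpreted formally. -/
def Herbrand (L : FOLang) (hc : L.HasConst) : FOStruc L where
  carrier := GroundTerm L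
  inhab := by
    obtain ⟨f, hf⟩ := hc
    refine ⟨⟨.func f (fun i => Fin.elim0 (Fin.cast hf i)), ?_⟩⟩
    ext x
    simp only [FOTerm.vars, Finset.mem_biUnion, Finset.mem_univ, true_and,
      Finset.notMem_empty, iff_false, not_exists]
    intro i
    exact Fin.elim0 (Fin.cast hf i)
  funcs := fun f ts => ⟨.func f (fun i => (ts i).1), by
    ext x
    simp only [FOTerm.vars, Finset.mem_biUnion, Finset.mem_univ, true_and,
      Finset.notMem_empty, iff_false, not_exists]
    intro i hx
    rw [(ts i).2] at hx
    exact Finset.notMem_empty x hx⟩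

/-- The language obtained by adding a countably infinite set of new
constants. -/
def addConsts (L : FOLang) : FOLang where
  Func := L.Func ⊕ ℕ
  farity := Sum.elim L.farity fun _ => 0
  Pred := L.Pred
  parity := L.parity

/-- The canonical embedding of terms into the extended language. -/
def FOTerm.lift {L : FOLang} : FOTerm L → FOTerm (addConsts L)
  | .var x => .var x
  | .func f ts => .func (Sum.inl f) fun i => (ts i).lift

/-- The canonical embedding of formulas into the extended language. -/
def FOForm.lift {L : FOLang} : FOForm L → FOForm (addConsts L)
  | .tru => .tru
  | .fal => .fal
  | .eq s t => .eq s.lift t.lift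
  | .atom p ts => .atom p fun i => (ts i).lift
  | .not F => .not F.lift
  | .and F G => .and F.lift G.lift
  | .or F G => .or F.lift G.lift
  | .imp F G => .imp F.lift G.lift
  | .iff F G => .iff F.lift G.lift
  | .ex x F => .ex x F.lift
  | .all x F => .all x F.lift
/-- A finite substitution: a finite set of variables (its domain) together
with an assignment of terms to variables which is the identity outside the
domain. -/
structure FinSubst (L : FOLang) where
  dom : Finset ℕ
  map : ℕ → FOTerm L
  outside : ∀ x ∉ dom, map x = .var x

namespace FinSubst

variable {L : FOLang}

/-- `Range(σ)`: the set of variables occurring in the terms `σ x`, `x ∈ Dom(σ)`. -/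
def range (σ : FinSubst L) : Finset ℕ :=
  σ.dom.biUnion fun x => (σ.map x).vars

/-- `θ` is an extension of `σ`. -/
def Extends (θ σ : FinSubst L) : Prop :=
  σ.dom ⊆ θ.dom ∧ ∀ x ∈ σ.dom, θ.map x = σ.map x

/-- `θ` is a regular extension of `σ`: it extends `σ` and maps
`Dom(θ) \ Dom(σ)` injectively into the variables not in `Range(σ)`. -/
def RegExt (θ σ : FinSubst L) : Prop :=
  Extends θ σ ∧
  (∀ x ∈ θ.dom, x ∉ σ.dom → ∃ y : ℕ, y ∉ σ.range ∧ θ.map x = .var y) ∧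
  Set.InjOn θ.map ↑(θ.dom \ σ.dom)

/-- The set of `M`-instances of a substitution. -/
def Inst {L : FOLang} (M : FOStruc L) (σ : FinSubst L) : Set (ℕ → M.carrier) :=
  { h | ∃ g : ℕ → M.carrier, ∀ x ∈ σ.dom, h x = (σ.map x).eval M g }

open Classical in
/-- The restriction of `σ` to `Dom(σ) ∩ X`. -/
noncomputable def restrict (σ : FinSubst L) (X : Set ℕ) : FinSubst L where
  dom := σ.dom.filter fun x => x ∈ X
  map := fun x => if x ∈ σ.dom ∧ x ∈ X then σ.map x else .var x
  outside := fun x hx => if_neg fun h => hx (Finset.mem_filter.2 ⟨h.1, h.2⟩)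

/-- The composition `σθ`, defined on `Dom(σ)` by `x ↦ (σ x)θ`. -/
def comp (σ θ : FinSubst L) : FinSubst L where
  dom := σ.dom
  map := fun x => if x ∈ σ.dom then (σ.map x).applyT θ.map else .var x
  outside := fun _ hx => if_neg hx

/-- `σ ≼ θ` : `θ` is more general than `σ`. -/
def Le (σ θ : FinSubst L) : Prop :=
  ∃ σ' θ' τ : FinSubst L,
    RegExt σ' σ ∧ RegExt θ' θ ∧ σ'.dom = θ'.dom ∧
    θ'.range ⊆ τ.dom ∧ σ' = θ'.comp τ

/-- `σ ≈ θ`. -/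
def Equiv (σ θ : FinSubst L) : Prop := Le σ θ ∧ Le θ σ

/-- A permutation: a substitution mapping its domain injectively to
variables. -/
def IsPerm (τ : FinSubst L) : Prop :=
  (∀ x ∈ τ.dom, ∃ y : ℕ, τ.map x = .var y) ∧ Set.InjOn τ.map ↑τ.dom

/-- The empty substitution. -/
def empty (L : FOLang) : FinSubst L where
  dom := ∅
  map := fun x => .var x
  outside := fun _ _ => rfl

/-- The kernel of a substitution: the intersection of all sets `X` of
variables such that `σ↾X ≈ σ`. -/
def kernel (σ : FinSubst L) : Set ℕ :=
  ⋂₀ { X : Set ℕ | Equiv (σ.restrict X) σ }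

end FinSubst

noncomputable section

theorem exists_notin_finset (s : Finset ℕ) : ∃ n : ℕ, n ∉ s :=
  ⟨s.sup id + 1, fun h => by
    have := Finset.le_sup (f := id) h
    simp only [id] at this
    omega⟩

/-- The first variable not belonging to a given finite set of variables. -/
def freshVar (s : Finset ℕ) : ℕ := Nat.find (exists_notin_finset s)

/-- Insert a binding into a substitution. -/
def FinSubst.insertB {L : FOLang} (σ : FinSubst L) (x : ℕ) (t : FOTerm L) :
    FinSubst L where
  dom := insert x σ.dom
  map := Function.update σ.map x t
  outside := by
    intro z hz
    have hzx : z ≠ x := fun h => hz (h ▸ Finset.mem_insert_self x σ.dom)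
    have hzd : z ∉ σ.dom := fun h => hz (Finset.mem_insert_of_mem h)
    rw [Function.update_of_ne hzx]
    exact σ.outside z hzd

/-- One step of the regular-extension procedure: extend the substitution
with a binding for `x` (to itself if possible, otherwise to the first
variable not occurring in the range). -/
def regStep {L : FOLang} (acc : FinSubst L) (x : ℕ) : FinSubst L :=
  if x ∈ acc.dom then acc
  else acc.insertB x (.var (if x ∈ acc.range then freshVar acc.range else x))

/-- Restrict `σ` to the free variables of `F` and extend the result
regularly to a substitution whose domain is exactly `fv F`. -/
def FinSubst.extendFV {L : FOLang} (σ : FinSubst L) (F : FOForm L) : FinSubst L :=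
  (F.fv.sort (· ≤ ·)).foldl regStep (σ.restrict ↑F.fv)

/-- Capture-avoiding simultaneous substitution on formulas (bound variables
are renamed as needed). -/
def FOForm.applyF {L : FOLang} (f : ℕ → FOTerm L) : FOForm L → FOForm L
  | .tru => .tru
  | .fal => .fal
  | .eq s t => .eq (s.applyT f) (t.applyT f)
  | .atom p ts => .atom p fun i => (ts i).applyT f
  | .not F => .not (F.applyF f)
  | .and F G => .and (F.applyF f) (G.applyF f)
  | .or F G => .or (F.applyF f) (G.applyF f)
  | .imp F G => .imp (F.applyF f) (G.applyF f)
  | .iff F G => .iff (F.applyF f) (G.applyF f)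
  | .ex x G =>
      let R : Finset ℕ := (G.fv.erase x).biUnion fun z => (f z).vars
      let y : ℕ := if x ∈ R then freshVar R else x
      .ex y (G.applyF (Function.update f x (.var y)))
  | .all x G =>
      let R : Finset ℕ := (G.fv.erase x).biUnion fun z => (f z).vars
      let y : ℕ := if x ∈ R then freshVar R else x
      .all y (G.applyF (Function.update f x (.var y)))

/-- The application `Fσ` of a finite substitution to a formula: restrict
`σ` to the free variables of `F`, extend regularly to all of `fv F`, and
substitute capture-avoidingly. -/
def FOForm.applyS {L : FOLang} (σ : FinSubst L) (F : FOForm L) : FOForm L :=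
  F.applyF (σ.extendFV F).map

end
/-- The set of finite substitutions together with an added bottom element
`⊥` (represented by `none`): the extended preorder. -/
def LeBot {L : FOLang} : Option (FinSubst L) → Option (FinSubst L) → Prop
  | none, _ => True
  | some _, none => False
  | some σ, some θ => FinSubst.Le σ θ

/-- The induced equivalence on `Subst⊥`. -/
def EquivBot {L : FOLang} (a b : Option (FinSubst L)) : Prop :=
  LeBot a b ∧ LeBot b a

/-- The quotient of `Subst⊥` by `≈`. -/
def SubstQuot (L : FOLang) : Type := Quot (EquivBot (L := L))

/-- The induced partial order on the quotient `Subst⊥/≈`. -/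
def SubstQuotLe {L : FOLang} (a b : SubstQuot L) : Prop :=
  ∃ s t : Option (FinSubst L), Quot.mk _ s = a ∧ Quot.mk _ t = b ∧ LeBot s t

/-- EQ-formulas as a subtype. -/
def EQSub (L : FOLang) : Type := { F : FOForm L // IsEQ F }

/-- The quotient of the set of EQ-formulas by `≈`. -/
def EQQuot (L : FOLang) : Type :=
  Quot (fun a b : EQSub L => EQequiv a.1 b.1)

/-- The induced partial order on the quotient of EQ-formulas. -/
def EQQuotLe {L : FOLang} (a b : EQQuot L) : Prop :=
  ∃ E E' : EQSub L, Quot.mk _ E = a ∧ Quot.mk _ E' = b ∧ EQle E.1 E'.1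

/-- The substitution `{x₁↦s₁, …, xₙ↦sₙ, y₁↦y₁, …, y_k↦y_k}` associated
with a solved form with equations `eqs` and parameters `params`. -/
theorem lookup_eq_none_of_not_mem {L : FOLang} (x : ℕ) :
    ∀ eqs : List (ℕ × FOTerm L), x ∉ eqs.map Prod.fst → eqs.lookup x = none := by
  intro eqs
  induction eqs with
  | nil => intro _; rfl
  | cons p rest ih =>
    intro hx1
    have hp : p.1 ≠ x := by
      intro h
      exact hx1 (by simp [h])
    have hr : x ∉ rest.map Prod.fst := fun h => hx1 (by simp [h])
    have hxp : (x == p.1) = false := beq_eq_false_iff_ne.mpr fun h => hp h.symm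
    simp only [List.lookup, hxp]
    exact ih hr

def solvedSubst {L : FOLang} (eqs : List (ℕ × FOTerm L)) (params : Finset ℕ) :
    FinSubst L where
  dom := (eqs.map Prod.fst).toFinset ∪ params
  map := fun x => (eqs.lookup x).getD (.var x)
  outside := by
    intro x hx
    have hx1 : x ∉ eqs.map Prod.fst := fun h =>
      hx (Finset.mem_union_left _ (List.mem_toFinset.2 h))
    simp [lookup_eq_none_of_not_mem x eqs hx1]
section Aux

open FOTerm

variable {L : FOLang}

theorem eval_congr {M : FOStruc L} {g g' : ℕ → M.carrier} :
    ∀ {t : FOTerm L}, (∀ z ∈ t.vars, g z = g' z) → t.eval M g = t.eval M g' := by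
  intro t
  induction t with
  | var x => intro h; exact h x (by simp [FOTerm.vars])
  | func f ts ih =>
    intro h
    simp only [FOTerm.eval]
    congr 1
    funext i
    exact ih i fun z hz => h z (by simp [FOTerm.vars]; exact ⟨i, hz⟩)

theorem eval_applyT {M : FOStruc L} {g : ℕ → M.carrier} {f : ℕ → FOTerm L} :
    ∀ t : FOTerm L, (t.applyT f).eval M g = t.eval M (fun z => (f z).eval M g) := by
  intro t
  induction t with
  | var x => rfl
  | func fc ts ih =>
    simp only [FOTerm.applyT, FOTerm.eval]
    congr 1
    funext i
    exact ih i

theorem applyT_applyT {f g : ℕ → FOTerm L} :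
    ∀ t : FOTerm L, (t.applyT g).applyT f = t.applyT (fun z => (g z).applyT f) := by
  intro t
  induction t with
  | var x => rfl
  | func fc ts ih =>
    simp only [FOTerm.applyT]
    congr 1
    funext i
    exact ih i

theorem applyT_congr {f f' : ℕ → FOTerm L} :
    ∀ {t : FOTerm L}, (∀ z ∈ t.vars, f z = f' z) → t.applyT f = t.applyT f' := by
  intro t
  induction t with
  | var x => intro h; exact h x (by simp [FOTerm.vars])
  | func fc ts ih =>
    intro h
    simp only [FOTerm.applyT]
    congr 1
    funext i
    exact ih i fun z hz => h z (by simp [FOTerm.vars]; exact ⟨i, hz⟩)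

theorem applyT_id {f : ℕ → FOTerm L} :
    ∀ {t : FOTerm L}, (∀ z ∈ t.vars, f z = .var z) → t.applyT f = t := by
  intro t
  induction t with
  | var x => intro h; exact h x (by simp [FOTerm.vars])
  | func fc ts ih =>
    intro h
    simp only [FOTerm.applyT]
    congr 1
    funext i
    exact ih i fun z hz => h z (by simp [FOTerm.vars]; exact ⟨i, hz⟩)

theorem applyT_eq_self {f : ℕ → FOTerm L} :
    ∀ {t : FOTerm L}, t.applyT f = t → ∀ z ∈ t.vars, f z = .var z := by
  intro t
  induction t with
  | var x =>
    intro h z hz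
    simp [FOTerm.vars] at hz
    subst hz
    exact h
  | func fc ts ih =>
    intro h z hz
    simp [FOTerm.vars] at hz
    obtain ⟨i, hi⟩ := hz
    simp only [FOTerm.applyT, FOTerm.func.injEq, heq_eq_eq] at h
    exact ih i (congrFun h.2 i) z hi

theorem mem_vars_applyT {f : ℕ → FOTerm L} {z y : ℕ} :
    ∀ {t : FOTerm L}, z ∈ t.vars → y ∈ (f z).vars → y ∈ (t.applyT f).vars := by
  intro t
  induction t with
  | var x =>
    intro hz hy
    simp [FOTerm.vars] at hz
    subst hz
    exact hy
  | func fc ts ih =>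
    intro hz hy
    simp [FOTerm.vars] at hz
    simp only [FOTerm.applyT, FOTerm.vars, Finset.mem_biUnion, Finset.mem_univ, true_and]
    obtain ⟨i, hi⟩ := hz
    exact ⟨i, ih i hi hy⟩

end Aux
section Aux2

variable {L : FOLang}

/-- Size of a term. -/
def tsize : FOTerm L → ℕ
  | .var _ => 1
  | .func _ ts => 1 + ∑ i, tsize (ts i)

theorem tsize_pos (t : FOTerm L) : 0 < tsize t := by
  cases t <;> simp [tsize]

/-- In a nontrivial FEA model, terms with the same value under every
valuation are equal. -/
theorem eval_inj {M : FOStruc L} (hM : IsFEA M) {a b : M.carrier} (hab : a ≠ b) :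
    ∀ s t : FOTerm L, (∀ g : ℕ → M.carrier, s.eval M g = t.eval M g) → s = t := by
  have key : ∀ (x : ℕ) (t : FOTerm L), (∀ i, ¬ t = FOTerm.var i) →
      (∀ g : ℕ → M.carrier, (FOTerm.var x).eval M g = t.eval M g) → False := by
    intro x t hnv hall
    by_cases hx : x ∈ t.vars
    · exact hM.occ x t (hnv x) hx (fun _ => a) (hall (fun _ => a))
    · have h1 := hall (fun n => if n = x then a else b)
      have h2 := hall (fun n => if n = x then b else b)
      have he : t.eval M (fun n => if n = x then a else b) =
          t.eval M (fun n => if n = x then b else b) := by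
        apply eval_congr
        intro z hz
        have : z ≠ x := fun h => hx (h ▸ hz)
        simp [this]
      simp only [FOTerm.eval, if_pos rfl] at h1 h2
      exact hab (h1.trans (he.trans h2.symm))
  intro s
  induction s with
  | var x =>
    intro t hall
    cases t with
    | var y =>
      by_cases hxy : x = y
      · exact hxy ▸ rfl
      · exfalso
        have := hall (fun n => if n = x then a else b)
        simp only [FOTerm.eval, if_pos rfl] at this
        rw [if_neg (fun h : y = x => hxy h.symm)] at this
        exact hab this
    | func f ts =>
      exact absurd (key x (.func f ts) (by intro i h; cases h) hall)
        not_false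
  | func f ss ih =>
    intro t hall
    cases t with
    | var y =>
      exact absurd (key y (.func f ss) (by intro i h; cases h)
        (fun g => (hall g).symm)) not_false
    | func f' ts =>
      by_cases hff : f = f'
      · subst hff
        have hcomp : ∀ i, ss i = ts i := by
          intro i
          apply ih i
          intro g
          have := hall g
          simp only [FOTerm.eval] at this
          exact congrFun (hM.inj f this) i
        exact congrArg _ (funext hcomp)
      · exfalso
        exact hM.disj f f' hff _ _ (by
          have := hall (fun _ => a)
          simpa only [FOTerm.eval] using this)

/-- Existence of an element outside the range of a given function symbol. -/
theorem exists_fresh {M : FOStruc L} (hM : IsFEA M) (hc : L.HasConst)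
    {a b : M.carrier} (hab : a ≠ b) (f : L.Func) :
    ∃ e : M.carrier, ∀ args, e ≠ M.funcs f args := by
  obtain ⟨c, hc0⟩ := hc
  by_cases hcf : c = f
  · subst hcf
    have hsub : ∀ args args' : Fin (L.farity c) → M.carrier, args = args' := by
      intro args args'
      funext i
      exact absurd (Fin.cast hc0 i).isLt (by omega)
    set v := M.funcs c (fun i => absurd (Fin.cast hc0 i).isLt (by omega)) with hv
    by_cases hva : a = v
    · refine ⟨b, fun args h => hab ?_⟩
      rw [hva, hv, hsub (fun i => absurd (Fin.cast hc0 i).isLt (by omega)) args]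
      exact h.symm
    · exact ⟨a, fun args h => hva (h.trans (congrArg _ (hsub args _)))⟩
  · exact ⟨M.funcs c (fun i => absurd (Fin.cast hc0 i).isLt (by omega)),
      fun args => hM.disj c f hcf _ args⟩

end Aux2
section Aux3

variable {L : FOLang}

theorem lemmaC_vars {M : FOStruc L} (hM : IsFEA M) {a b : M.carrier} (hab : a ≠ b)
    (ps : List (FOTerm L × FOTerm L))
    (hvars : ∀ p ∈ ps, ∃ z, p.2 = FOTerm.var z)
    (H : ∀ g : ℕ → M.carrier, ∃ g', ∀ p ∈ ps, p.1.eval M g = p.2.eval M g') :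
    ∃ τ : ℕ → FOTerm L, ∀ p ∈ ps, p.1 = p.2.applyT τ := by
  classical
  refine ⟨fun z => if h : ∃ s, (s, FOTerm.var z) ∈ ps then h.choose else .var z, ?_⟩
  rintro ⟨s, t⟩ hp
  obtain ⟨z, rfl⟩ := hvars _ hp
  have hex : ∃ s', (s', FOTerm.var z) ∈ ps := ⟨s, hp⟩
  simp only [FOTerm.applyT, dif_pos hex]
  refine (eval_inj hM hab _ _ ?_).symm
  intro g
  obtain ⟨g', hg'⟩ := H g
  have h1 := hg' _ hex.choose_spec
  have h2 := hg' _ hp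
  exact h1.trans h2.symm

theorem lemmaC {M : FOStruc L} (hM : IsFEA M) (hc : L.HasConst)
    {a b : M.carrier} (hab : a ≠ b) :
    ∀ (N : ℕ) (ps : List (FOTerm L × FOTerm L)),
      (ps.map fun p => tsize p.2).sum ≤ N →
      (∀ g : ℕ → M.carrier, ∃ g', ∀ p ∈ ps, p.1.eval M g = p.2.eval M g') →
      ∃ τ : ℕ → FOTerm L, ∀ p ∈ ps, p.1 = p.2.applyT τ := by
  intro N
  induction N with
  | zero =>
    intro ps hsz H
    cases ps with
    | nil => exact ⟨fun z => .var z, by simp⟩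
    | cons p l =>
      exfalso
      simp only [List.map_cons, List.sum_cons] at hsz
      have := tsize_pos p.2
      omega
  | succ n ihN =>
    intro ps hsz H
    by_cases hvars : ∀ p ∈ ps, ∃ z, p.2 = FOTerm.var z
    · exact lemmaC_vars hM hab ps hvars H
    · push_neg at hvars
      obtain ⟨p₀, hp₀, hnv⟩ := hvars
      cases hp2 : p₀.2 with
      | var z => exact absurd hp2 (hnv z)
      | func f ts =>
        cases hs : p₀.1 with
        | var y =>
          exfalso
          obtain ⟨e, he⟩ := exists_fresh hM hc hab f
          obtain ⟨g', hg'⟩ := H (fun _ => e)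
          have h0 := hg' p₀ hp₀
          rw [hs, hp2] at h0
          simp only [FOTerm.eval] at h0
          exact he _ h0
        | func f' ss =>
          by_cases hff : f' = f
          · subst hff
            obtain ⟨l1, l2, rfl⟩ := List.append_of_mem hp₀
            set newps := l1 ++ l2 ++ List.ofFn (fun i => (ss i, ts i)) with hnew
            have hb : (newps.map fun p => tsize p.2).sum ≤ n := by
              simp only [hnew, List.map_append, List.map_cons, List.sum_append,
                List.sum_cons, hp2, tsize, List.map_ofFn, List.sum_ofFn,
                Function.comp] at hsz ⊢
              omega
            have H' : ∀ g : ℕ → M.carrier, ∃ g',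
                ∀ p ∈ newps, p.1.eval M g = p.2.eval M g' := by
              intro g
              obtain ⟨g', hg'⟩ := H g
              refine ⟨g', ?_⟩
              intro p hp
              rw [hnew, List.append_assoc] at hp
              rcases List.mem_append.1 hp with hp | hp
              · exact hg' p (by simp [hp])
              · rcases List.mem_append.1 hp with hp | hp
                · exact hg' p (by simp [hp])
                · obtain ⟨i, rfl⟩ := List.mem_ofFn.1 hp
                  have h0 := hg' p₀ (by simp)
                  rw [hs, hp2] at h0
                  simp only [FOTerm.eval] at h0
                  exact congrFun (hM.inj f' h0) i
            obtain ⟨τ, hτ⟩ := ihN newps hb H'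
            refine ⟨τ, ?_⟩
            intro p hp
            simp only [List.mem_append, List.mem_cons] at hp
            rcases hp with hp | hp | hp
            · exact hτ p (by simp [hnew, hp])
            · subst hp
              rw [hs, hp2]
              simp only [FOTerm.applyT]
              congr 1
              funext i
              exact hτ (ss i, ts i) (by
                simp only [hnew, List.mem_append]
                exact Or.inr (List.mem_ofFn.2 ⟨i, rfl⟩))
            · exact hτ p (by simp [hnew, hp])
          · exfalso
            obtain ⟨g', hg'⟩ := H (fun _ => a)
            have h0 := hg' p₀ hp₀
            rw [hs, hp2] at h0
            simp only [FOTerm.eval] at h0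
            exact hM.disj f' f hff _ _ h0

end Aux3
section Aux4

variable {L : FOLang}

theorem FinSubst.ext' {σ θ : FinSubst L} (h1 : σ.dom = θ.dom) (h2 : σ.map = θ.map) :
    σ = θ := by
  cases σ; cases θ; simp_all

theorem regExt_refl (σ : FinSubst L) : FinSubst.RegExt σ σ := by
  refine ⟨⟨subset_rfl, fun _ _ => rfl⟩, fun x hx hx' => absurd hx hx', ?_⟩
  rw [Finset.sdiff_self, Finset.coe_empty]
  exact Set.injOn_empty _

/-- Semantic subsumption implies syntactic matching. -/
theorem semSub {M : FOStruc L} (hM : IsFEA M) (hc : L.HasConst)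
    {a b : M.carrier} (hab : a ≠ b) (σ θ : FinSubst L) (hdom : σ.dom = θ.dom)
    (hsub : FinSubst.Inst M σ ⊆ FinSubst.Inst M θ) :
    ∃ τ : ℕ → FOTerm L, ∀ x ∈ σ.dom, σ.map x = (θ.map x).applyT τ := by
  classical
  set ps := σ.dom.toList.map (fun x => (σ.map x, θ.map x)) with hps
  have H : ∀ g : ℕ → M.carrier, ∃ g', ∀ p ∈ ps, p.1.eval M g = p.2.eval M g' := by
    intro g
    have hmem : (fun x => (σ.map x).eval M g) ∈ FinSubst.Inst M σ :=
      ⟨g, fun x _ => rfl⟩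
    obtain ⟨g', hg'⟩ := hsub hmem
    refine ⟨g', ?_⟩
    intro p hp
    obtain ⟨x, hx, rfl⟩ := List.mem_map.1 hp
    exact hg' x (hdom ▸ Finset.mem_toList.1 hx)
  obtain ⟨τ, hτ⟩ := lemmaC hM hc hab ((ps.map fun p => tsize p.2).sum) ps le_rfl H
  refine ⟨τ, ?_⟩
  intro x hx
  exact hτ (σ.map x, θ.map x) (List.mem_map.2 ⟨x, Finset.mem_toList.2 hx, rfl⟩)

/-- Equal instance sets imply that the substitutions are variants. -/
theorem instEq_variants {M : FOStruc L} (hM : IsFEA M) (hc : L.HasConst)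
    (hnt : M.Nontriv) (σ θ : FinSubst L) (hdom : σ.dom = θ.dom)
    (hAB : FinSubst.Inst M σ = FinSubst.Inst M θ) :
    ∃ τ : FinSubst L, FinSubst.IsPerm τ ∧ θ.range ⊆ τ.dom ∧ σ = θ.comp τ := by
  classical
  obtain ⟨a, b, hab⟩ := hnt
  obtain ⟨τ₁, h1⟩ := semSub hM hc hab σ θ hdom (le_of_eq hAB)
  obtain ⟨τ₂, h2⟩ := semSub hM hc hab θ σ hdom.symm (le_of_eq hAB.symm)
  have key : ∀ z ∈ θ.range, ∃ y, τ₁ z = .var y ∧ τ₂ y = .var z := by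
    intro z hz
    obtain ⟨x, hx, hzx⟩ := Finset.mem_biUnion.1 hz
    have e1 : ((θ.map x).applyT τ₁).applyT τ₂ = θ.map x := by
      rw [← h1 x (hdom ▸ hx)]
      exact (h2 x hx).symm
    rw [applyT_applyT] at e1
    have hfix := applyT_eq_self e1 z hzx
    cases ht : τ₁ z with
    | var y =>
      rw [ht] at hfix
      exact ⟨y, rfl, hfix⟩
    | func f ss =>
      rw [ht] at hfix
      exact absurd hfix (by simp [FOTerm.applyT])
  refine ⟨⟨θ.range, fun z => if z ∈ θ.range then τ₁ z else .var z,
    fun z hz => if_neg hz⟩, ⟨?_, ?_⟩, subset_rfl, ?_⟩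
  · intro z hz
    obtain ⟨y, hy, _⟩ := key z hz
    exact ⟨y, by simp only [if_pos hz, hy]⟩
  · intro z hz z' hz' hzz
    simp only [Finset.coe_sort_coe, Finset.mem_coe] at hz hz'
    obtain ⟨y, hy, hy2⟩ := key z hz
    obtain ⟨y', hy', hy2'⟩ := key z' hz'
    simp only [if_pos hz, if_pos hz', hy, hy', FOTerm.var.injEq] at hzz
    subst hzz
    rw [hy2] at hy2'
    exact FOTerm.var.inj hy2'
  · apply FinSubst.ext'
    · exact hdom
    · funext x
      by_cases hx : x ∈ σ.dom
      · simp only [FinSubst.comp, if_pos (hdom ▸ hx)]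
        rw [h1 x hx]
        apply applyT_congr
        intro z hz
        have hzr : z ∈ θ.range := Finset.mem_biUnion.2 ⟨x, hdom ▸ hx, hz⟩
        rw [if_pos hzr]
      · simp only [FinSubst.comp]
        rw [if_neg (hdom ▸ hx), σ.outside x hx]

theorem inst_regExt {M : FOStruc L} {σ' σ : FinSubst L} (h : FinSubst.RegExt σ' σ) :
    FinSubst.Inst M σ' = FinSubst.Inst M σ := by
  classical
  obtain ⟨⟨hsub, hagree⟩, hnew, hinj⟩ := h
  ext h0
  constructor
  · rintro ⟨g, hg⟩
    exact ⟨g, fun x hx => (hg x (hsub hx)).trans (by rw [hagree x hx])⟩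
  · rintro ⟨g, hg⟩
    refine ⟨fun z => if hz : ∃ x, x ∈ σ'.dom ∧ x ∉ σ.dom ∧ σ'.map x = .var z then
      h0 hz.choose else g z, ?_⟩
    intro x hx
    by_cases hxσ : x ∈ σ.dom
    · rw [hagree x hxσ, hg x hxσ]
      apply eval_congr
      intro z hz
      have hcond : ¬ ∃ x', x' ∈ σ'.dom ∧ x' ∉ σ.dom ∧ σ'.map x' = .var z := by
        rintro ⟨x', h1', h2', h3'⟩
        obtain ⟨y, hyr, hymap⟩ := hnew x' h1' h2'
        rw [hymap] at h3'
        have : y = z := FOTerm.var.inj h3'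
        exact hyr (this ▸ Finset.mem_biUnion.2 ⟨x, hxσ, hz⟩)
      rw [dif_neg hcond]
    · obtain ⟨y, hyr, hymap⟩ := hnew x hx hxσ
      rw [hymap]
      simp only [FOTerm.eval]
      have hcond : ∃ x', x' ∈ σ'.dom ∧ x' ∉ σ.dom ∧ σ'.map x' = .var y :=
        ⟨x, hx, hxσ, hymap⟩
      rw [dif_pos hcond]
      obtain ⟨hc1, hc2, hc3⟩ := hcond.choose_spec
      have : hcond.choose = x := by
        apply hinj (Finset.mem_coe.2 (Finset.mem_sdiff.2 ⟨hc1, hc2⟩))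
          (Finset.mem_coe.2 (Finset.mem_sdiff.2 ⟨hx, hxσ⟩))
        rw [hc3, hymap]
      rw [this]

theorem inst_comp {M : FOStruc L} (θ τ : FinSubst L) :
    FinSubst.Inst M (θ.comp τ) ⊆ FinSubst.Inst M θ := by
  rintro h0 ⟨g, hg⟩
  refine ⟨fun z => (τ.map z).eval M g, ?_⟩
  intro x hx
  have hx' : x ∈ (θ.comp τ).dom := hx
  have := hg x hx'
  rw [this]
  simp only [FinSubst.comp, if_pos hx]
  rw [eval_applyT]

theorem le_inst {M : FOStruc L} {σ θ : FinSubst L} (h : FinSubst.Le σ θ) :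
    FinSubst.Inst M σ ⊆ FinSubst.Inst M θ := by
  obtain ⟨σ', θ', τ, r1, r2, hd, hr, heq⟩ := h
  rw [← inst_regExt (M := M) r1, ← inst_regExt (M := M) r2, heq]
  exact inst_comp θ' τ

theorem variants_equiv (σ θ : FinSubst L) (hdom : σ.dom = θ.dom)
    (h : ∃ τ : FinSubst L, FinSubst.IsPerm τ ∧ θ.range ⊆ τ.dom ∧ σ = θ.comp τ) :
    FinSubst.Equiv σ θ := by
  classical
  obtain ⟨τ, ⟨hperm1, hperm2⟩, hr, heq⟩ := h
  constructor
  · exact ⟨σ, θ, τ, regExt_refl σ, regExt_refl θ, hdom, hr, heq⟩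
  · set invmap : ℕ → FOTerm L := fun y =>
      if h : y ∈ σ.range ∧ ∃ z, z ∈ τ.dom ∧ τ.map z = FOTerm.var y then
        .var h.2.choose else .var y with hinvdef
    refine ⟨θ, σ, ⟨σ.range, invmap, fun y hy =>
      dif_neg (fun hy' => hy hy'.1)⟩, regExt_refl θ, regExt_refl σ, hdom.symm,
      subset_rfl, ?_⟩
    apply FinSubst.ext'
    · exact hdom.symm
    · funext x
      by_cases hx : x ∈ σ.dom
      · simp only [FinSubst.comp, if_pos hx]
        have hσx : σ.map x = (θ.map x).applyT τ.map := by
          rw [heq]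
          simp only [FinSubst.comp, if_pos (hdom ▸ hx)]
        rw [hσx, applyT_applyT]
        refine (applyT_id ?_).symm
        intro z hz
        have hzr : z ∈ θ.range := Finset.mem_biUnion.2 ⟨x, hdom ▸ hx, hz⟩
        have hzd : z ∈ τ.dom := hr hzr
        obtain ⟨y, hy⟩ := hperm1 z hzd
        rw [hy]
        simp only [FOTerm.applyT]
        have hyr : y ∈ σ.range := by
          refine Finset.mem_biUnion.2 ⟨x, hx, ?_⟩
          rw [hσx]
          exact mem_vars_applyT hz (by rw [hy]; simp [FOTerm.vars])
        have hcond : y ∈ σ.range ∧ ∃ z', z' ∈ τ.dom ∧ τ.map z' = FOTerm.var y :=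
          ⟨hyr, z, hzd, hy⟩
        rw [hinvdef]
        simp only
        rw [dif_pos hcond]
        obtain ⟨hs1, hs2⟩ := hcond.2.choose_spec
        have : hcond.2.choose = z := by
          apply hperm2 (Finset.mem_coe.2 hs1) (Finset.mem_coe.2 hzd)
          rw [hs2, hy]
        rw [this]
      · simp only [FinSubst.comp, if_neg hx]
        exact θ.outside x (hdom ▸ hx)

end Aux4
/-- For finite substitutions `σ`, `θ` over the same
domain and a non-trivial model `M` of `FEA(L)`, the following are
equivalent: `Inst_M(σ) = Inst_M(θ)`; `σ ≈ θ`; `σ` and `θ` are variants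
(`σ = θτ` for some permutation `τ`). -/
theorem subst_equiv_iff_variants {L : FOLang} (hc : L.HasConst)
    (M : FOStruc L) (hM : IsFEA M) (hnt : M.Nontriv)
    (σ θ : FinSubst L) (hdom : σ.dom = θ.dom) :
    (FinSubst.Inst M σ = FinSubst.Inst M θ ↔ FinSubst.Equiv σ θ) ∧
    (FinSubst.Equiv σ θ ↔
      ∃ τ : FinSubst L, FinSubst.IsPerm τ ∧ θ.range ⊆ τ.dom ∧ σ = θ.comp τ) := by
  have pBA : FinSubst.Equiv σ θ → FinSubst.Inst M σ = FinSubst.Inst M θ :=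
    fun ⟨h1, h2⟩ => Set.Subset.antisymm (le_inst h1) (le_inst h2)
  have pAC := instEq_variants hM hc hnt σ θ hdom
  have pCB := variants_equiv σ θ hdom
  exact ⟨⟨fun hA => pCB (pAC hA), pBA⟩, ⟨fun hB => pAC (pBA hB), pCB⟩⟩
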